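/- arXiv:0905.3424 — 3 statements merged into one kernel-verified Lean document; each statement's English description precedes it below -/
import Mathlib

section
/- Let a : ℝ → ℝ be an increasing function on [S, S+D] with D > 0, let h : (0,∞) → (1,∞) be an increasing function with ∫₁^∞ (y · h(y)^{1/n})^{-1} dy < ∞, and let A > 0, n ≥ 1. Suppose that for all S ≤ s ≤ s+t ≤ S+D one has t^n · a(s) ≤ A · a(s+t) / h(a(s+t)^{-1/n}), and a(s) > 0 on [S, S+D]. Then there exists a constant C > 0 depending only on A, D, h, n (independent of S and of a) such that a(S+D) ≥ C. -/
/-!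
Write `b(x) = a(x)^{-1/n}`, `c = 2^{-1/n}` (`ratio`), `w(y) = 1 / (y h(y)^{1/n})` (`weight`) and
`K = (2A)^{1/n} / (1 - c)` (`gain`). Stepping back from `x` by `δ = (2A / h(b(x)))^{1/n}`
(`stepLength`), the hypothesis forces `a` to halve, so `b` grows at least by the factor `1/c`;
since `w` is decreasing, `δ ≤ K ∫_{c b(x)}^{b(x)} w`. Hence `x - K ∫_{c b(x)}^∞ w` does not
decrease along the iteration. If `a(S+D)` is small this quantity starts above `S`, so the
iteration stays in `[S, S+D]` while `a` halves at every step, contradicting `a ≥ a(S) > 0`.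
-/

open Set MeasureTheory Filter Topology

lemma exists_mem_lt_of_forall_exists_le_half {α : Type*} {G : Set α} {f : α → ℝ}
    (hne : G.Nonempty) (hstep : ∀ x ∈ G, ∃ y ∈ G, f y ≤ f x / 2) {ε : ℝ} (hε : 0 < ε) :
    ∃ x ∈ G, f x < ε := by
  obtain ⟨x₀, hx₀⟩ := hne
  have hiter : ∀ k : ℕ, ∃ x ∈ G, f x ≤ f x₀ / 2 ^ k := by
    intro k
    induction k with
    | zero => exact ⟨x₀, hx₀, by simp⟩
    | succ k ih =>
      obtain ⟨x, hx, hxk⟩ := ih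
      obtain ⟨y, hy, hyx⟩ := hstep x hx
      refine ⟨y, hy, hyx.trans ?_⟩
      rw [pow_succ, ← div_div]
      linarith
  obtain ⟨k, hk⟩ := pow_unbounded_of_one_lt (f x₀ / ε) one_lt_two
  obtain ⟨x, hx, hxk⟩ := hiter k
  refine ⟨x, hx, hxk.trans_lt ?_⟩
  rw [div_lt_iff₀ hε] at hk
  rwa [div_lt_iff₀ (by positivity), mul_comm]

lemma tendsto_setIntegral_Ioi_atTop {E : Type*} [NormedAddCommGroup E] [NormedSpace ℝ E]
    {f : ℝ → E} {a : ℝ} (hf : IntegrableOn f (Ioi a)) :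
    Tendsto (fun y => ∫ x in Ioi y, f x) atTop (𝓝 0) := by
  have hempty : ⋂ y : ℝ, Ioi y = ∅ :=
    eq_empty_of_forall_notMem fun x hx => lt_irrefl x (mem_iInter.1 hx x)
  simpa [hempty] using tendsto_setIntegral_of_antitone (μ := volume)
    (fun _ => measurableSet_Ioi) (fun _ _ hyz => Ioi_subset_Ioi hyz) ⟨a, hf⟩

lemma antitoneOn_setIntegral_Ioi {f : ℝ → ℝ} {a : ℝ} (hf : IntegrableOn f (Ioi a))
    (hf0 : ∀ x ∈ Ioi a, 0 ≤ f x) : AntitoneOn (fun y => ∫ x in Ioi y, f x) (Ici a) :=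
  fun _ hy _ _ hyz => setIntegral_mono_set (hf.mono_set (Ioi_subset_Ioi hy))
    (ae_restrict_of_forall_mem measurableSet_Ioi fun x hx =>
      hf0 x (mem_Ioi.2 ((mem_Ici.1 hy).trans_lt hx)))
    (Ioi_subset_Ioi hyz).eventuallyLE

lemma AntitoneOn.sub_mul_le_intervalIntegral {g : ℝ → ℝ} {u v : ℝ} (huv : u ≤ v)
    (hg : AntitoneOn g (Icc u v)) : (v - u) * g v ≤ ∫ y in u..v, g y := by
  have hint : IntervalIntegrable g volume u v :=
    AntitoneOn.intervalIntegrable (by rwa [uIcc_of_le huv])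
  calc (v - u) * g v = ∫ _ in u..v, g v := by simp
    _ ≤ ∫ y in u..v, g y := intervalIntegral.integral_mono_on huv intervalIntegrable_const hint
          fun y hy => hg hy (right_mem_Icc.2 huv) hy.2

lemma Real.rpow_le_two_rpow_mul_rpow {u v p : ℝ} (hu : 0 < u) (huv : u ≤ v / 2) (hp : p ≤ 0) :
    v ^ p ≤ 2 ^ p * u ^ p := by
  calc v ^ p = 2 ^ p * (v / 2) ^ p := by
        rw [← Real.mul_rpow zero_le_two (by linarith), mul_div_cancel₀ v two_ne_zero]
    _ ≤ 2 ^ p * u ^ p :=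
        mul_le_mul_of_nonneg_left (Real.rpow_le_rpow_of_nonpos hu huv hp) (by positivity)

noncomputable section

namespace KolodziejIteration

def weight (n : ℕ) (h : ℝ → ℝ) (y : ℝ) : ℝ := (y * h y ^ ((1 : ℝ) / n))⁻¹

def tail (n : ℕ) (h : ℝ → ℝ) (y : ℝ) : ℝ := ∫ t in Ioi y, weight n h t

def ratio (n : ℕ) : ℝ := 2 ^ (-(1 : ℝ) / n)

def gain (n : ℕ) (A : ℝ) : ℝ := (2 * A) ^ ((1 : ℝ) / n) / (1 - ratio n)

def stepLength (n : ℕ) (A : ℝ) (h : ℝ → ℝ) (b : ℝ) : ℝ := (2 * A / h b) ^ ((1 : ℝ) / n)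

variable {n : ℕ} {A : ℝ} {h : ℝ → ℝ}

lemma ratio_pos : 0 < ratio n := Real.rpow_pos_of_pos two_pos _

lemma ratio_lt_one (hn : n ≠ 0) : ratio n < 1 :=
  Real.rpow_lt_one_of_one_lt_of_neg one_lt_two
    (div_neg_of_neg_of_pos neg_one_lt_zero (by positivity))

lemma gain_nonneg (hn : n ≠ 0) (hA : 0 ≤ A) : 0 ≤ gain n A :=
  div_nonneg (by positivity) (sub_nonneg.2 (ratio_lt_one hn).le)

lemma stepLength_pow (hn : n ≠ 0) (hA : 0 ≤ A) (hb : 0 < h b) :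
    stepLength n A h b ^ n = 2 * A / h b := by
  rw [stepLength, one_div, Real.rpow_inv_natCast_pow (by positivity) hn]

lemma weight_pos (hh : ∀ y, 0 < y → 0 < h y) {y : ℝ} (hy : 0 < y) : 0 < weight n h y := by
  have := hh y hy
  unfold weight
  positivity

lemma antitoneOn_weight (hmono : MonotoneOn h (Ioi 0)) (hh : ∀ y, 0 < y → 0 < h y) :
    AntitoneOn (weight n h) (Ioi 0) := fun y hy z hz hyz => by
  have hy0 : (0 : ℝ) < y := hy
  have hhy := hh y hy
  exact inv_anti₀ (by positivity) (mul_le_mul hyz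
    (Real.rpow_le_rpow hhy.le (hmono hy hz hyz) (by positivity)) (by positivity) (le_of_lt hz))

lemma tail_nonneg (hh : ∀ y, 0 < y → 0 < h y) {y : ℝ} (hy : 0 ≤ y) : 0 ≤ tail n h y :=
  setIntegral_nonneg measurableSet_Ioi fun _ ht => (weight_pos hh (hy.trans_lt ht)).le

lemma stepLength_le_gain_mul_tail_sub (hn : n ≠ 0) (hA : 0 ≤ A) (hmono : MonotoneOn h (Ioi 0))
    (hh : ∀ y, 0 < y → 0 < h y) (hint : IntegrableOn (weight n h) (Ioi 1)) {b : ℝ}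
    (hb : 1 ≤ ratio n * b) :
    stepLength n A h b ≤ gain n A * (tail n h (ratio n * b) - tail n h b) := by
  have hc1 := ratio_lt_one hn
  have hb0 : 0 < b := pos_of_mul_pos_right (one_pos.trans_le hb) ratio_pos.le
  have hcb : ratio n * b ≤ b := mul_le_of_le_one_left hb0.le hc1.le
  have hslab : (b - ratio n * b) * weight n h b ≤ tail n h (ratio n * b) - tail n h b := by
    rw [tail, tail, intervalIntegral.integral_Ioi_sub_Ioi (hint.mono_set (Ioi_subset_Ioi hb)) hcb]
    exact AntitoneOn.sub_mul_le_intervalIntegral hcb ((antitoneOn_weight hmono hh).mono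
      fun y hy => (zero_lt_one.trans_le hb).trans_le hy.1)
  have hhb := hh b hb0
  calc stepLength n A h b = gain n A * ((b - ratio n * b) * weight n h b) := by
        rw [stepLength, gain, weight, Real.div_rpow (by positivity) hhb.le]
        field_simp [(sub_pos.2 hc1).ne']
    _ ≤ gain n A * (tail n h (ratio n * b) - tail n h b) :=
        mul_le_mul_of_nonneg_left hslab (gain_nonneg hn hA)

lemma le_half_of_stepLength_pow_mul_le (hn : n ≠ 0) (hA : 0 < A) {b u v : ℝ} (hb : 0 < h b)
    (hle : stepLength n A h b ^ n * u ≤ A * v / h b) : u ≤ v / 2 := by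
  rw [stepLength_pow hn hA.le hb, div_mul_eq_mul_div, div_le_div_iff_of_pos_right hb] at hle
  nlinarith

lemma le_ratio_mul_rpow_of_le (hn : n ≠ 0) {M u : ℝ} (hM : 0 < M) (hu : 0 < u)
    (huM : u ≤ (2 * M ^ n)⁻¹) : M ≤ ratio n * u ^ (-(1 : ℝ) / n) := by
  have hMn : ((M ^ n)⁻¹) ^ (-(1 : ℝ) / n) = M := by
    rw [Real.inv_rpow (by positivity), ← Real.rpow_neg (by positivity), neg_div, neg_neg, one_div,
      Real.pow_rpow_inv_natCast hM.le hn]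
  rw [← hMn]
  exact Real.rpow_le_two_rpow_mul_rpow hu (huM.trans_eq (by ring))
    (div_nonpos_of_nonpos_of_nonneg (by norm_num) (Nat.cast_nonneg n))

def goodSet (n : ℕ) (A : ℝ) (h a : ℝ → ℝ) (S D : ℝ) : Set ℝ :=
  {x ∈ Icc S (S + D) | 1 ≤ ratio n * a x ^ (-(1 : ℝ) / n) ∧
    S < x - gain n A * tail n h (ratio n * a x ^ (-(1 : ℝ) / n))}

lemma exists_mem_goodSet_le_half (hn : n ≠ 0) (hA : 0 < A) (hmono : MonotoneOn h (Ioi 0))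
    (hh : ∀ y, 0 < y → 0 < h y) (hint : IntegrableOn (weight n h) (Ioi 1))
    {a : ℝ → ℝ} {S D : ℝ} (apos : ∀ x ∈ Icc S (S + D), 0 < a x)
    (hkey : ∀ s t : ℝ, S ≤ s → 0 ≤ t → s + t ≤ S + D →
      t ^ n * a s ≤ A * a (s + t) / h ((a (s + t)) ^ (-(1 : ℝ) / n)))
    {x : ℝ} (hx : x ∈ goodSet n A h a S D) : ∃ y ∈ goodSet n A h a S D, a y ≤ a x / 2 := by
  obtain ⟨hxI, hx1, hxS⟩ := hx
  set b := a x ^ (-(1 : ℝ) / n)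
  set δ := stepLength n A h b
  have hb1 : 1 ≤ b := hx1.trans
    (mul_le_of_le_one_left (Real.rpow_nonneg (apos x hxI).le _) (ratio_lt_one hn).le)
  have hδ := stepLength_le_gain_mul_tail_sub hn hA.le hmono hh hint hx1
  have hK := gain_nonneg hn hA.le
  have htail : 0 ≤ gain n A * tail n h b :=
    mul_nonneg hK (tail_nonneg hh (zero_le_one.trans hb1))
  have hhb := hh b (by linarith)
  have hδ0 : 0 ≤ δ := Real.rpow_nonneg (div_nonneg (by positivity) hhb.le) _
  have hy : x - δ ∈ Icc S (S + D) := ⟨by linarith, by linarith [hxI.2]⟩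
  have hhalf : a (x - δ) ≤ a x / 2 := by
    refine le_half_of_stepLength_pow_mul_le hn hA hhb ?_
    simpa using hkey (x - δ) δ hy.1 hδ0 (by linarith [hxI.2])
  have hlevel : b ≤ ratio n * a (x - δ) ^ (-(1 : ℝ) / n) :=
    Real.rpow_le_two_rpow_mul_rpow (apos _ hy) hhalf
      (div_nonpos_of_nonpos_of_nonneg (by norm_num) (Nat.cast_nonneg n))
  have htail_anti : tail n h (ratio n * a (x - δ) ^ (-(1 : ℝ) / n)) ≤ tail n h b :=
    antitoneOn_setIntegral_Ioi hint (fun _ ht => (weight_pos hh (zero_lt_one.trans ht)).le)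
      hb1 (hb1.trans hlevel) hlevel
  refine ⟨x - δ, ⟨hy, hb1.trans hlevel, ?_⟩, hhalf⟩
  linarith [mul_le_mul_of_nonneg_left htail_anti hK]

end KolodziejIteration

end

open KolodziejIteration in
/-- Kołodziej-type iteration lemma (Lemma 2.1 of the paper): if `a` is an increasing
positive function on `[S, S+D]` satisfying `t^n · a(s) ≤ A · a(s+t) / h(a(s+t)^{-1/n})`
for all `S ≤ s ≤ s+t ≤ S+D`, where `h : (0,∞) → (1,∞)` is increasing with
`∫₁^∞ (y·h(y)^{1/n})⁻¹ dy < ∞`, then `a(S+D)` is bounded below by a constant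
depending only on `A`, `D`, `h`, `n` (independent of `S` and `a`). -/
theorem stmt0 (n : ℕ) (hn : 1 ≤ n) (A D : ℝ) (hA : 0 < A) (hD : 0 < D)
    (h : ℝ → ℝ) (hmono : MonotoneOn h (Ioi (0 : ℝ)))
    (hrange : ∀ y : ℝ, 0 < y → 1 < h y)
    (hint : IntegrableOn (fun y : ℝ => (y * (h y) ^ ((1 : ℝ) / n))⁻¹) (Ioi (1 : ℝ))) :
    ∃ C : ℝ, 0 < C ∧ ∀ (S : ℝ) (a : ℝ → ℝ),
      MonotoneOn a (Icc S (S + D)) →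
      (∀ x ∈ Icc S (S + D), 0 < a x) →
      (∀ s t : ℝ, S ≤ s → 0 ≤ t → s + t ≤ S + D →
        t ^ n * a s ≤ A * a (s + t) / h ((a (s + t)) ^ (-(1 : ℝ) / n))) →
      C ≤ a (S + D) := by
  have hn0 : n ≠ 0 := by omega
  have hh : ∀ y, 0 < y → 0 < h y := fun y hy => one_pos.trans (hrange y hy)
  obtain ⟨M, hM1, hM⟩ : ∃ M, 1 ≤ M ∧ ∀ y, M ≤ y → gain n A * tail n h y < D := by
    have hsmall := ((tendsto_setIntegral_Ioi_atTop hint).const_mul (gain n A)).eventually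
      (gt_mem_nhds (show gain n A * 0 < D by simpa using hD))
    obtain ⟨M, hM⟩ := eventually_atTop.1 hsmall
    exact ⟨max M 1, le_max_right M 1, fun y hy => hM y (le_of_max_le_left hy)⟩
  refine ⟨(2 * M ^ n)⁻¹, by positivity, fun S a amono apos hkey => ?_⟩
  by_contra! hlt
  have hSD : S + D ∈ Icc S (S + D) := right_mem_Icc.2 (by linarith)
  have hSS : S ∈ Icc S (S + D) := left_mem_Icc.2 (by linarith)
  have hstart := le_ratio_mul_rpow_of_le hn0 (by linarith) (apos _ hSD) hlt.le
  have hSD_good : S + D ∈ goodSet n A h a S D :=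
    ⟨hSD, hM1.trans hstart, by linarith [hM _ hstart]⟩
  obtain ⟨x, ⟨hx, -⟩, hxS⟩ := exists_mem_lt_of_forall_exists_le_half ⟨S + D, hSD_good⟩
    (fun x hx => exists_mem_goodSet_le_half hn0 hA hmono hh hint apos hkey hx) (apos S hSS)
  exact hxS.not_ge (amono hSS hx hx.1)
end

section
/- Let n ≥ 2 and c ∈ (0, 1/2). There exists a constant C > 0, independent of t, such that for all t ∈ ℂ with |t| < 1, ∫_{B₁(0) ⊂ ℂⁿ} |t − (z₁² + ⋯ + z_n²)|^{−(1+c)} dμ(z) ≤ C, where dμ is the Lebesgue measure on ℂⁿ ≅ ℝ^{2n} and B₁(0) is the unit ball. -/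
open MeasureTheory Metric
open scoped ENNReal

/-!
Write `s = 1 + c ∈ (1, 3/2)`. Since `s < 2`, `∫_{|z|<1} |z - a|^{-s}` is bounded uniformly in
`a ∈ ℂ`. Factoring `b - z² = -(z - ρ)(z + ρ)` with `ρ² = b`, AM-GM gives a uniform bound for
`∫_{|z|<1} |b - z²|^{-s/2}`, while, one factor being at least `|ρ|`,
`∫_{|z|<1} |b - z²|^{-s} ≤ const · |b|^{-s/2}`. Integrating first in `y` and then in `x` bounds
`∫∫ |a - x² - y²|^{-s}` uniformly in `a`; the remaining `n - 2` coordinates only contribute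
powers of the area of the disc, and the Euclidean unit ball lies in the unit polydisc.
-/

namespace Real

theorem mul_rpow_half_le_add {p q : ℝ} (hp : 0 ≤ p) (hq : 0 ≤ q) (x : ℝ) :
    (p * q) ^ (x / 2) ≤ p ^ x + q ^ x := by
  have hsq : ∀ {r : ℝ}, 0 ≤ r → r ^ x = (r ^ (x / 2)) ^ 2 := fun hr => by
    rw [← Real.rpow_mul_natCast hr]; ring_nf
  rw [Real.mul_rpow hp hq, hsq hp, hsq hq]
  nlinarith [two_mul_le_add_sq (p ^ (x / 2)) (q ^ (x / 2)),
    Real.rpow_nonneg hp (x / 2), Real.rpow_nonneg hq (x / 2)]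

theorem mul_rpow_neg_le_of_le_max {s r p q : ℝ} (hs : 0 ≤ s) (hr : 0 < r) (hp : 0 ≤ p)
    (hq : 0 ≤ q) (hrpq : r ≤ max p q) :
    (p * q) ^ (-s) ≤ r ^ (-s) * (p ^ (-s) + q ^ (-s)) := by
  have hanti : ∀ {u : ℝ}, r ≤ u → u ^ (-s) ≤ r ^ (-s) := fun h =>
    Real.rpow_le_rpow_of_nonpos hr h (by linarith)
  have hp' := Real.rpow_nonneg hp (-s)
  have hq' := Real.rpow_nonneg hq (-s)
  rw [Real.mul_rpow hp hq]
  rcases le_max_iff.mp hrpq with h | h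
  · nlinarith [hanti h]
  · nlinarith [hanti h]

end Real

theorem setLIntegral_ball_norm_sub_rpow_neg_le {E : Type*} [NormedAddCommGroup E]
    [MeasurableSpace E] [BorelSpace E] (μ : Measure E) [μ.IsAddRightInvariant] {s : ℝ}
    (hs : 0 ≤ s) (a : E) :
    ∫⁻ z in ball 0 1, ENNReal.ofReal (‖z - a‖ ^ (-s)) ∂μ ≤
      μ (ball 0 1) + ∫⁻ z in ball 0 1, ENNReal.ofReal (‖z‖ ^ (-s)) ∂μ := by
  set g := (ball (0 : E) 1).indicator fun w => ENNReal.ofReal (‖w‖ ^ (-s))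
  have hpt : ∀ w : E, ENNReal.ofReal (‖w‖ ^ (-s)) ≤ 1 + g w := fun w => by
    by_cases hw : w ∈ ball (0 : E) 1
    · simp only [g, Set.indicator_of_mem hw, le_add_self]
    · refine le_add_right (ENNReal.ofReal_le_one.mpr ?_)
      exact Real.rpow_le_one_of_one_le_of_nonpos (by simpa using hw) (by linarith)
  calc ∫⁻ z in ball 0 1, ENNReal.ofReal (‖z - a‖ ^ (-s)) ∂μ
      ≤ ∫⁻ z in ball 0 1, (1 + g (z - a)) ∂μ := lintegral_mono fun z => hpt _
    _ = μ (ball 0 1) + ∫⁻ z in ball 0 1, g (z - a) ∂μ := by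
      rw [lintegral_add_left measurable_const, setLIntegral_const, one_mul]
    _ ≤ μ (ball 0 1) + ∫⁻ z, g (z - a) ∂μ := by gcongr; exact Measure.restrict_le_self
    _ = μ (ball 0 1) + ∫⁻ z in ball 0 1, ENNReal.ofReal (‖z‖ ^ (-s)) ∂μ := by
      rw [lintegral_sub_right_eq_self g a, lintegral_indicator measurableSet_ball]

theorem setLIntegral_ball_norm_rpow_neg_lt_top {E : Type*} [NormedAddCommGroup E]
    [NormedSpace ℝ E] [FiniteDimensional ℝ E] [MeasurableSpace E] [BorelSpace E]
    (μ : Measure E) [μ.IsAddHaarMeasure] (hE : 1 ≤ Module.finrank ℝ E) {s : ℝ}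
    (hs : s < Module.finrank ℝ E) :
    ∫⁻ z in ball 0 1, ENNReal.ofReal (‖z‖ ^ (-s)) ∂μ < ∞ := by
  refine Integrable.lintegral_lt_top (integrableOn_ball_of_norm_le_rpow hE hs (C := 1) ?_ ?_)
  · exact ae_of_all _ fun z => by
      rw [one_mul, Real.norm_of_nonneg (Real.rpow_nonneg (norm_nonneg _) _)]
  · exact (continuous_norm.measurable.pow_const _).aestronglyMeasurable

theorem Complex.norm_sq_sub_sq (ρ z : ℂ) : ‖ρ ^ 2 - z ^ 2‖ = ‖z - ρ‖ * ‖z - -ρ‖ := by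
  rw [← norm_mul, ← norm_neg]; ring_nf

section SquarePotential

variable (μ : Measure ℂ) {s : ℝ} {C : ℝ≥0∞}
  (hC : ∀ a : ℂ, ∫⁻ z, ENNReal.ofReal (‖z - a‖ ^ (-s)) ∂μ ≤ C)
include hC

theorem lintegral_norm_sub_sq_rpow_le (a : ℂ) :
    ∫⁻ z, ENNReal.ofReal (‖a - z ^ 2‖ ^ (-s / 2)) ∂μ ≤ 2 * C := by
  obtain ⟨ρ, rfl⟩ := IsAlgClosed.exists_pow_nat_eq a two_pos
  calc ∫⁻ z, ENNReal.ofReal (‖ρ ^ 2 - z ^ 2‖ ^ (-s / 2)) ∂μ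
      ≤ ∫⁻ z, (ENNReal.ofReal (‖z - ρ‖ ^ (-s)) + ENNReal.ofReal (‖z - -ρ‖ ^ (-s))) ∂μ := by
        refine lintegral_mono fun z => ?_
        rw [← ENNReal.ofReal_add (by positivity) (by positivity), Complex.norm_sq_sub_sq]
        exact ENNReal.ofReal_le_ofReal (Real.mul_rpow_half_le_add (norm_nonneg _) (norm_nonneg _) _)
    _ = ∫⁻ z, ENNReal.ofReal (‖z - ρ‖ ^ (-s)) ∂μ + ∫⁻ z, ENNReal.ofReal (‖z - -ρ‖ ^ (-s)) ∂μ :=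
        lintegral_add_left (by fun_prop) _
    _ ≤ 2 * C := by rw [two_mul]; exact add_le_add (hC ρ) (hC (-ρ))

theorem lintegral_norm_sub_sq_rpow_le_of_ne_zero (hs : 0 ≤ s) {b : ℂ} (hb : b ≠ 0) :
    ∫⁻ z, ENNReal.ofReal (‖b - z ^ 2‖ ^ (-s)) ∂μ ≤ ENNReal.ofReal (‖b‖ ^ (-s / 2)) * (2 * C) := by
  obtain ⟨ρ, rfl⟩ := IsAlgClosed.exists_pow_nat_eq b two_pos
  have hρ : 0 < ‖ρ‖ := norm_pos_iff.mpr (by rintro rfl; simp at hb)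
  have hnorm : ‖ρ ^ 2‖ ^ (-s / 2) = ‖ρ‖ ^ (-s) := by
    rw [norm_pow, ← Real.rpow_natCast, ← Real.rpow_mul (norm_nonneg _)]; ring_nf
  -- `2ρ = (z + ρ) - (z - ρ)`, so one of the two factors is at least `‖ρ‖`
  have hmax : ∀ z : ℂ, ‖ρ‖ ≤ max ‖z - ρ‖ ‖z - -ρ‖ := fun z => by
    have : ‖(2 : ℂ) * ρ‖ ≤ ‖z - -ρ‖ + ‖z - ρ‖ := by
      rw [show (2 : ℂ) * ρ = (z - -ρ) - (z - ρ) by ring]; exact norm_sub_le _ _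
    rw [norm_mul, Complex.norm_two] at this
    rcases le_total ‖z - ρ‖ ‖z - -ρ‖ with h | h
    · rw [max_eq_right h]; linarith
    · rw [max_eq_left h]; linarith
  calc ∫⁻ z, ENNReal.ofReal (‖ρ ^ 2 - z ^ 2‖ ^ (-s)) ∂μ
      ≤ ∫⁻ z, ENNReal.ofReal (‖ρ ^ 2‖ ^ (-s / 2)) *
          (ENNReal.ofReal (‖z - ρ‖ ^ (-s)) + ENNReal.ofReal (‖z - -ρ‖ ^ (-s))) ∂μ := by
        refine lintegral_mono fun z => ?_
        rw [← ENNReal.ofReal_add (by positivity) (by positivity),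
          ← ENNReal.ofReal_mul (by positivity), Complex.norm_sq_sub_sq, hnorm]
        exact ENNReal.ofReal_le_ofReal <|
          Real.mul_rpow_neg_le_of_le_max hs hρ (norm_nonneg _) (norm_nonneg _) (hmax z)
    _ = ENNReal.ofReal (‖ρ ^ 2‖ ^ (-s / 2)) *
          (∫⁻ z, ENNReal.ofReal (‖z - ρ‖ ^ (-s)) ∂μ +
            ∫⁻ z, ENNReal.ofReal (‖z - -ρ‖ ^ (-s)) ∂μ) := by
        rw [lintegral_const_mul _ (by fun_prop), lintegral_add_left (by fun_prop)]
    _ ≤ ENNReal.ofReal (‖ρ ^ 2‖ ^ (-s / 2)) * (2 * C) := by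
        rw [two_mul]; gcongr <;> apply hC

theorem lintegral_lintegral_norm_sub_sq_sub_sq_rpow_le [NullSingletonClass μ] (hs : 0 ≤ s) (a : ℂ) :
    ∫⁻ x, ∫⁻ y, ENNReal.ofReal (‖a - x ^ 2 - y ^ 2‖ ^ (-s)) ∂μ ∂μ ≤ (2 * C) ^ 2 := by
  have hae : ∀ᵐ x ∂μ, a - x ^ 2 ≠ 0 := by
    obtain ⟨ρ, rfl⟩ := IsAlgClosed.exists_pow_nat_eq a two_pos
    refine measure_mono_null (fun x hx => ?_) ((Set.toFinite {ρ, -ρ}).measure_zero μ)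
    have hx : x ^ 2 = ρ ^ 2 := by simpa using (sub_eq_zero.mp (of_not_not hx)).symm
    simpa using sq_eq_sq_iff_eq_or_eq_neg.mp hx
  calc ∫⁻ x, ∫⁻ y, ENNReal.ofReal (‖a - x ^ 2 - y ^ 2‖ ^ (-s)) ∂μ ∂μ
      ≤ ∫⁻ x, ENNReal.ofReal (‖a - x ^ 2‖ ^ (-s / 2)) * (2 * C) ∂μ := by
        refine lintegral_mono_ae (hae.mono fun x hx => ?_)
        exact lintegral_norm_sub_sq_rpow_le_of_ne_zero μ hC hs hx
    _ = (∫⁻ x, ENNReal.ofReal (‖a - x ^ 2‖ ^ (-s / 2)) ∂μ) * (2 * C) :=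
        lintegral_mul_const _ (by fun_prop)
    _ ≤ (2 * C) ^ 2 := by
        rw [sq]; gcongr; exact lintegral_norm_sub_sq_rpow_le μ hC a

end SquarePotential

theorem lintegral_pi_fin_succ_comp_sub_sum_sq (μ : Measure ℂ) [SigmaFinite μ]
    {f : ℂ → ℝ≥0∞} (hf : Measurable f) (k : ℕ) (a : ℂ) :
    ∫⁻ z, f (a - ∑ i, z i ^ 2) ∂Measure.pi (fun _ : Fin (k + 1) => μ) =
      ∫⁻ x, ∫⁻ w, f (a - x ^ 2 - ∑ i, w i ^ 2) ∂Measure.pi (fun _ : Fin k => μ) ∂μ := by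
  rw [← lintegral_prod (fun p : ℂ × (Fin k → ℂ) => f (a - p.1 ^ 2 - ∑ i, p.2 i ^ 2))
      (by fun_prop),
    ← (measurePreserving_piFinSuccAbove (fun _ : Fin (k + 1) => μ) 0).lintegral_comp
      (by fun_prop)]
  simp [Fin.sum_univ_succ, sub_sub, MeasurableEquiv.piFinSuccAbove_apply, Fin.tail]

theorem lintegral_pi_comp_sub_sum_sq_le (μ : Measure ℂ) [IsFiniteMeasure μ]
    {f : ℂ → ℝ≥0∞} (hf : Measurable f) {K : ℝ≥0∞}
    (hK : ∀ a, ∫⁻ x, ∫⁻ y, f (a - x ^ 2 - y ^ 2) ∂μ ∂μ ≤ K) (m : ℕ) (a : ℂ) :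
    ∫⁻ z, f (a - ∑ i, z i ^ 2) ∂Measure.pi (fun _ : Fin (m + 2) => μ) ≤ K * μ Set.univ ^ m := by
  induction m generalizing a with
  | zero =>
    simpa only [lintegral_pi_fin_succ_comp_sub_sum_sq μ hf, Finset.univ_eq_empty,
      Finset.sum_empty, sub_zero, lintegral_const, Measure.pi_univ, Finset.prod_empty, mul_one,
      pow_zero] using hK a
  | succ m ih =>
    calc ∫⁻ z, f (a - ∑ i, z i ^ 2) ∂Measure.pi (fun _ : Fin (m + 3) => μ)
        = ∫⁻ x, ∫⁻ w, f (a - x ^ 2 - ∑ i, w i ^ 2) ∂Measure.pi (fun _ : Fin (m + 2) => μ) ∂μ :=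
          lintegral_pi_fin_succ_comp_sub_sum_sq μ hf _ a
      _ ≤ ∫⁻ _, K * μ Set.univ ^ m ∂μ := lintegral_mono fun x => ih (a - x ^ 2)
      _ = K * μ Set.univ ^ (m + 1) := by rw [lintegral_const, mul_assoc, pow_succ]

theorem setLIntegral_sum_norm_sq_lt_one_le_lintegral_pi {n : ℕ} (f : (Fin n → ℂ) → ℝ≥0∞) :
    ∫⁻ z in {z : Fin n → ℂ | ∑ i, ‖z i‖ ^ 2 < 1}, f z ≤
      ∫⁻ z, f z ∂Measure.pi (fun _ : Fin n => volume.restrict (ball (0 : ℂ) 1)) := by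
  rw [← Measure.restrict_pi_pi, ← volume_pi]
  refine lintegral_mono' (Measure.restrict_mono (fun z hz i _ => ?_) le_rfl) le_rfl
  have hi : ‖z i‖ ^ 2 < 1 :=
    (Finset.single_le_sum (fun j _ => sq_nonneg ‖z j‖) (Finset.mem_univ i)).trans_lt hz
  simpa using (sq_lt_one_iff₀ (norm_nonneg _)).mp hi

/-- Uniform bound on the conifold integral: for `n ≥ 2` and `c ∈ (0, 1/2)` there is
`C > 0`, independent of `t`, with
`∫_{B₁(0) ⊂ ℂⁿ} |t − (z₁² + ⋯ + z_n²)|^{−(1+c)} dμ(z) ≤ C` for all `|t| < 1`.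
Here `ℂⁿ` is realized as `Fin n → ℂ` with the Lebesgue (product) measure, and the
unit ball is the Euclidean ball `∑ |zᵢ|² < 1`. -/
theorem stmt1 (n : ℕ) (hn : 2 ≤ n) (c : ℝ) (hc : c ∈ Set.Ioo (0 : ℝ) (1 / 2)) :
    ∃ C : ℝ, 0 < C ∧ ∀ t : ℂ, ‖t‖ < 1 →
      (∫ z in {z : Fin n → ℂ | ∑ i, (‖z i‖) ^ 2 < 1},
          (‖t - ∑ i, (z i) ^ 2‖) ^ (-(1 + c))) ≤ C := by
  obtain ⟨m, rfl⟩ := Nat.exists_eq_add_of_le' hn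
  obtain ⟨hc0, hc1⟩ := hc
  set s := 1 + c
  let μ := volume.restrict (ball (0 : ℂ) 1)
  have : IsFiniteMeasure μ := isFiniteMeasure_restrict.mpr measure_ball_lt_top.ne
  set M := volume (ball (0 : ℂ) 1) + ∫⁻ z in ball (0 : ℂ) 1, ENNReal.ofReal (‖z‖ ^ (-s))
  have hM : M ≠ ∞ := ENNReal.add_ne_top.mpr ⟨measure_ball_lt_top.ne,
    (setLIntegral_ball_norm_rpow_neg_lt_top volume (by simp [Complex.finrank_real_complex])
      (by simp only [Complex.finrank_real_complex, Nat.cast_ofNat]; linarith)).ne⟩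
  have hK := lintegral_pi_comp_sub_sum_sq_le μ (f := fun b => ENNReal.ofReal (‖b‖ ^ (-s)))
    (by fun_prop)
    (lintegral_lintegral_norm_sub_sq_sub_sq_rpow_le μ
      (setLIntegral_ball_norm_sub_rpow_neg_le volume (by linarith)) (by linarith)) m
  refine ⟨((2 * M) ^ 2 * μ Set.univ ^ m).toReal + 1, by positivity, fun t _ => ?_⟩
  have hmeas : Measurable fun z : Fin (m + 2) → ℂ => ‖t - ∑ i, z i ^ 2‖ ^ (-s) := by fun_prop
  rw [integral_eq_lintegral_of_nonneg_ae (ae_of_all _ fun _ => by positivity)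
    hmeas.aestronglyMeasurable]
  refine (ENNReal.toReal_mono (by finiteness) ?_).trans (le_add_of_nonneg_right zero_le_one)
  exact (setLIntegral_sum_norm_sq_lt_one_le_lintegral_pi _).trans (hK t)
end

section
/- Let M be a complex space with a ℂ*-action fixing a point 0 ∈ M, and let f = h·g where h is a nowhere-vanishing holomorphic function near 0 and g is a ℂ*-equivariant holomorphic function of degree d (i.e., g(t·z) = t^d g(z)). Then there exists a holomorphic map F : M → M which is biholomorphic near 0 such that f ∘ F = g. -/
/-!
Take a holomorphic `d`-th root `u` of `h` near `0` and put `G z := ρ (u z) z`. On `M`,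
equivariance gives `g ∘ G = uᵈ • g = f`, so `F := G⁻¹` works once `G` is a local biholomorphism
at `0`. The `i`-th component of `DG(z)` is `v ↦ u(z)^wᵢ vᵢ + zᵢ · D(u^wᵢ)(z) v`. The Cauchy
estimates keep `D(u^wᵢ)` bounded near `0`, so `DG(z)` tends to the invertible map
`diag (u(0)^wᵢ)` as `z → 0`. This uses only the boundedness of `D(u^wᵢ)`, not its continuity,
and is enough for the inverse function theorem.
-/

open Set Filter Metric Topology

theorem isBoundedUnder_norm_fderiv_nhds {E F : Type*} [NormedAddCommGroup E] [NormedSpace ℂ E]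
    [NormedAddCommGroup F] [NormedSpace ℂ F] {f : E → F} {x₀ : E}
    (hf : ∀ᶠ x in 𝓝 x₀, DifferentiableAt ℂ f x) :
    IsBoundedUnder (· ≤ ·) (𝓝 x₀) (norm ∘ fderiv ℂ f) := by
  obtain ⟨δ, hδ, hball⟩ := Metric.eventually_nhds_iff_ball.mp
    (hf.and ((hf.self_of_nhds.continuousAt).eventually (ball_mem_nhds (f x₀) one_pos)))
  refine ⟨2 / (δ / 2), eventually_nhds_iff_ball.mpr ⟨δ / 2, by positivity, fun x hx => ?_⟩⟩
  have hsub : ball x (δ / 2) ⊆ ball x₀ δ := fun y hy => by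
    rw [mem_ball] at hx hy ⊢
    linarith [dist_triangle y x x₀]
  refine Complex.norm_fderiv_le_div_of_mapsTo_ball
    (fun y hy => (hball y (hsub hy)).1.differentiableWithinAt) (fun y hy => ?_) (by positivity)
  have hy := (hball y (hsub hy)).2
  have hx := (hball x (hsub (mem_ball_self (by positivity)))).2
  rw [mem_closedBall]
  linarith [dist_triangle_right (f y) (f x) (f x₀)]

theorem exists_eventually_differentiableAt_and_pow_eq {E : Type*} [NormedAddCommGroup E]
    [NormedSpace ℂ E] {h : E → ℂ} {x₀ : E} (hh : ∀ᶠ x in 𝓝 x₀, DifferentiableAt ℂ h x)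
    (hx₀ : h x₀ ≠ 0) {d : ℕ} (hd : d ≠ 0) :
    ∃ u : E → ℂ, ∀ᶠ x in 𝓝 x₀, DifferentiableAt ℂ u x ∧ u x ^ d = h x := by
  obtain ⟨c, hc⟩ := IsAlgClosed.exists_pow_nat_eq (h x₀) (Nat.pos_of_ne_zero hd)
  have hslit : ∀ᶠ x in 𝓝 x₀, h x / h x₀ ∈ Complex.slitPlane :=
    (hh.self_of_nhds.continuousAt.div_const _).eventually
      (Complex.isOpen_slitPlane.mem_nhds (by simp [hx₀]))
  refine ⟨fun x => c * Complex.exp (Complex.log (h x / h x₀) / d), ?_⟩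
  filter_upwards [hh, hslit] with x hx hxs
  refine ⟨by fun_prop (disch := exact hxs), ?_⟩
  rw [mul_pow, ← Complex.exp_nat_mul, mul_div_cancel₀ _ (Nat.cast_ne_zero.mpr hd),
    Complex.exp_log (Complex.slitPlane_ne_zero hxs), hc, mul_div_cancel₀ _ hx₀]

section PiMulApply

variable {𝕜 : Type*} [NontriviallyNormedField 𝕜] {ι : Type*}

theorem hasFDerivAt_pi_mul_apply [Fintype ι] {a : ι → (ι → 𝕜) → 𝕜}
    {a' : ι → (ι → 𝕜) →L[𝕜] 𝕜} {x : ι → 𝕜} (ha : ∀ i, HasFDerivAt (a i) (a' i) x) :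
    HasFDerivAt (fun z i => a i z * z i)
      (ContinuousLinearMap.pi fun i => a i x • ContinuousLinearMap.proj i + x i • a' i) x :=
  hasFDerivAt_pi.mpr fun i => (ha i).mul (hasFDerivAt_apply i x)

theorem isInvertible_pi_smul_proj {c : ι → 𝕜} (hc : ∀ i, c i ≠ 0) :
    (ContinuousLinearMap.pi fun i =>
      c i • ContinuousLinearMap.proj (R := 𝕜) (φ := fun _ : ι => 𝕜) i).IsInvertible :=
  ⟨.piCongrRight fun i => ContinuousLinearEquiv.unitsEquivAut 𝕜 (Units.mk0 (c i) (hc i)), by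
    ext v i; simp [mul_comm]⟩

end PiMulApply

theorem tendsto_fderiv_pi_mul_apply {ι : Type*} [Fintype ι] {a : ι → (ι → ℂ) → ℂ}
    (ha : ∀ i, ∀ᶠ z in 𝓝 0, DifferentiableAt ℂ (a i) z) :
    Tendsto (fderiv ℂ fun z i => a i z * z i) (𝓝 0)
      (𝓝 (ContinuousLinearMap.pi fun i => a i 0 • ContinuousLinearMap.proj i)) := by
  have hderiv : (fun z => ContinuousLinearMap.pi fun i =>
      a i z • ContinuousLinearMap.proj i + z i • fderiv ℂ (a i) z) =ᶠ[𝓝 0]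
      fderiv ℂ fun z i => a i z * z i := by
    filter_upwards [eventually_all.mpr ha] with z hz
    exact (hasFDerivAt_pi_mul_apply fun i => (hz i).hasFDerivAt).fderiv.symm
  refine Tendsto.congr' hderiv ?_
  have hpi := (ContinuousLinearMap.piEquivL ℂ (ι → ℂ) fun _ : ι => ℂ).continuous.tendsto
  refine (hpi _).comp (tendsto_pi_nhds.mpr fun i => ?_)
  have hsmall : Tendsto (fun z : ι → ℂ => z i • fderiv ℂ (a i) z) (𝓝 0) (𝓝 0) :=
    ((continuous_apply i).tendsto' 0 0 rfl).zero_smul_isBoundedUnder_le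
      (isBoundedUnder_norm_fderiv_nhds (ha i))
  simpa using ((ha i).self_of_nhds.continuousAt.tendsto.smul_const _).add hsmall

theorem exists_openPartialHomeomorph_of_tendsto_fderiv {𝕜 : Type*} [RCLike 𝕜]
    {E F : Type*} [NormedAddCommGroup E] [NormedSpace 𝕜 E] [CompleteSpace E]
    [NormedAddCommGroup F] [NormedSpace 𝕜 F] [CompleteSpace F]
    {f : E → F} {f' : E →L[𝕜] F} {a : E} {s : Set E}
    (hf : ∀ᶠ x in 𝓝 a, DifferentiableAt 𝕜 f x) (hf' : Tendsto (fderiv 𝕜 f) (𝓝 a) (𝓝 f'))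
    (hinv : f'.IsInvertible) (hs : s ∈ 𝓝 a) :
    ∃ P : OpenPartialHomeomorph E F, ⇑P = f ∧ a ∈ P.source ∧ P.source ⊆ s ∧
      DifferentiableOn 𝕜 f P.source ∧ DifferentiableOn 𝕜 P.symm P.target := by
  obtain ⟨e, rfl⟩ := hinv
  have hfa : fderiv 𝕜 f a = e :=
    tendsto_nhds_unique (tendsto_pure_nhds (fderiv 𝕜 f) a) (hf'.mono_left (pure_le_nhds a))
  have hstrict : HasStrictFDerivAt f (e : E →L[𝕜] F) a := by
    rw [← hfa] at hf' ⊢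
    exact hasStrictFDerivAt_of_hasFDerivAt_of_continuousAt
      (hf.mono fun x hx => hx.hasFDerivAt) hf'
  set t := {x | DifferentiableAt 𝕜 f x ∧
    fderiv 𝕜 f x ∈ range ((↑) : (E ≃L[𝕜] F) → E →L[𝕜] F)} ∩ s
  have ht : t ∈ 𝓝 a :=
    inter_mem (hf.and (hf' (ContinuousLinearEquiv.isOpen.mem_nhds ⟨e, rfl⟩))) hs
  set P := (hstrict.toOpenPartialHomeomorph f).restrOpen (interior t) isOpen_interior
  have hP : ⇑P = f := hstrict.toOpenPartialHomeomorph_coe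
  refine ⟨P, hP, ⟨hstrict.mem_toOpenPartialHomeomorph_source, mem_interior_iff_mem_nhds.mpr ht⟩,
    fun x hx => (interior_subset hx.2).2,
    fun x hx => (interior_subset hx.2).1.1.differentiableWithinAt, fun y hy => ?_⟩
  obtain ⟨⟨hdiff, e', he'⟩, -⟩ := interior_subset (P.map_target hy).2
  have hderiv : HasFDerivAt P (e' : E →L[𝕜] F) (P.symm y) := by
    rw [hP, he']
    exact hdiff.hasFDerivAt
  exact (P.hasFDerivAt_symm hy hderiv).differentiableAt.differentiableWithinAt

theorem exists_openPartialHomeomorph_pow_mul_apply {ι : Type*} [Fintype ι] (w : ι → ℕ)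
    {u : (ι → ℂ) → ℂ} (hu : ∀ᶠ z in 𝓝 0, DifferentiableAt ℂ u z) (hu0 : u 0 ≠ 0)
    {s : Set (ι → ℂ)} (hs : s ∈ 𝓝 0) :
    ∃ P : OpenPartialHomeomorph (ι → ℂ) (ι → ℂ), (⇑P = fun z i => u z ^ w i * z i) ∧
      0 ∈ P.source ∧ 0 ∈ P.target ∧ P.source ⊆ s ∧
      DifferentiableOn ℂ P P.source ∧ DifferentiableOn ℂ P.symm P.target := by
  obtain ⟨P, hP, h0, hPs, hPdiff, hPsymm⟩ := exists_openPartialHomeomorph_of_tendsto_fderiv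
    (hu.mono fun z hz =>
      (hasFDerivAt_pi_mul_apply fun i => (hz.pow (w i)).hasFDerivAt).differentiableAt)
    (tendsto_fderiv_pi_mul_apply fun i => hu.mono fun z hz => hz.pow (w i))
    (isInvertible_pi_smul_proj fun i => pow_ne_zero (w i) hu0) hs
  refine ⟨P, hP, h0, ?_, hPs, hP ▸ hPdiff, hPsymm⟩
  simpa [hP, Pi.zero_def] using P.map_source h0

theorem stmt14_general (m : ℕ) (w : Fin m → ℕ)
    (M : Set (Fin m → ℂ))
    (ρ : ℂ → (Fin m → ℂ) → (Fin m → ℂ))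
    (hρ : ∀ t z i, ρ t z i = t ^ (w i) * z i)
    (hMinv : ∀ (t : ℂ), t ≠ 0 → ∀ z ∈ M, ρ t z ∈ M)
    (d : ℕ) (hd : 0 < d)
    (g : (Fin m → ℂ) → ℂ)
    (hg : ∀ (t : ℂ), t ≠ 0 → ∀ z ∈ M, g (ρ t z) = t ^ d * g z)
    (h : (Fin m → ℂ) → ℂ)
    (W : Set (Fin m → ℂ)) (hW : W ∈ nhds (0 : Fin m → ℂ))
    (hh : DifferentiableOn ℂ h W) (hh0 : ∀ z ∈ W, h z ≠ 0)
    (f : (Fin m → ℂ) → ℂ) (hfhg : ∀ z ∈ W, f z = h z * g z) :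
    ∃ U ∈ nhds (0 : Fin m → ℂ), ∃ F : (Fin m → ℂ) → (Fin m → ℂ),
      DifferentiableOn ℂ F U ∧ Set.MapsTo F (U ∩ M) M ∧
      (∃ V ∈ nhds (0 : Fin m → ℂ), ∃ G : (Fin m → ℂ) → (Fin m → ℂ),
        DifferentiableOn ℂ G V ∧ Set.MapsTo G (V ∩ M) (U ∩ M) ∧
        (∀ z ∈ U ∩ M, G (F z) = z) ∧ ∀ z ∈ V ∩ M, F (G z) = z) ∧
      ∀ z ∈ U ∩ M, f (F z) = g z := by
  obtain ⟨u, hu⟩ := exists_eventually_differentiableAt_and_pow_eq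
    (hh.eventually_differentiableAt hW) (hh0 0 (mem_of_mem_nhds hW)) hd.ne'
  set s := {z | DifferentiableAt ℂ u z ∧ u z ^ d = h z} ∩ W
  have hs : s ∈ 𝓝 0 := inter_mem hu hW
  have hu0 : ∀ z ∈ s, u z ≠ 0 := fun z hz hz0 =>
    hh0 z hz.2 (by rw [← hz.1.2, hz0, zero_pow hd.ne'])
  obtain ⟨P, hPG, h0P, h0T, hPs, hPdiff, hPsymm⟩ := exists_openPartialHomeomorph_pow_mul_apply w
    (hu.mono fun _ => And.left) (hu0 0 (mem_of_mem_nhds hs)) hs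
  replace hPG : ⇑P = fun z => ρ (u z) z := hPG.trans (funext fun z => funext (hρ (u z) z)).symm
  have hGP : ∀ z ∈ P.target, ρ (u (P.symm z)) (P.symm z) = z := fun z hz => by
    simpa only [hPG] using P.right_inv hz
  have hsymmM : MapsTo P.symm (P.target ∩ M) M := by
    rintro z ⟨hz, hzM⟩
    have hx := hu0 _ (hPs (P.map_target hz))
    have hinv : ρ (u (P.symm z))⁻¹ (ρ (u (P.symm z)) (P.symm z)) = P.symm z :=
      funext fun i => by simp only [hρ, inv_pow, inv_mul_cancel_left₀ (pow_ne_zero _ hx)]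
    rw [← hinv, hGP z hz]
    exact hMinv _ (inv_ne_zero hx) z hzM
  refine ⟨P.target, P.open_target.mem_nhds h0T, P.symm, hPsymm, hsymmM,
    ⟨P.source, P.open_source.mem_nhds h0P, P, hPdiff, fun z hz => ⟨P.map_source hz.1,
      hPG ▸ hMinv _ (hu0 z (hPs hz.1)) z hz.2⟩, fun z hz => P.right_inv hz.1,
      fun z hz => P.left_inv hz.1⟩, fun z hz => ?_⟩
  obtain ⟨⟨-, hpow⟩, hzW⟩ := hPs (P.map_target hz.1)
  rw [hfhg _ hzW, ← hpow, ← hg _ (hu0 _ (hPs (P.map_target hz.1))) _ (hsymmM hz)]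
  exact congrArg g (hGP z hz.1)

/-- Lemma cy11 of the paper: let `M ⊆ ℂᵐ` be invariant under a `ℂ*`-action fixing
`0` (realized as a weighted scaling action `ρ_t(z) = (t^{w₁}z₁, …, t^{wₘ}zₘ)`),
and let `f = h·g` where `h` is holomorphic and nowhere vanishing near `0` and `g`
is `ℂ*`-equivariant of degree `d` (`g(ρ_t z) = t^d g(z)`).  Then there is a
holomorphic map `F : M → M`, biholomorphic near `0`, with `f ∘ F = g` near `0`. -/
theorem stmt14 (m : ℕ) (w : Fin m → ℕ) (hw : ∀ i, 0 < w i)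
    (M : Set (Fin m → ℂ))
    (ρ : ℂ → (Fin m → ℂ) → (Fin m → ℂ))
    (hρ : ∀ t z i, ρ t z i = t ^ (w i) * z i)
    (hMinv : ∀ (t : ℂ), t ≠ 0 → ∀ z ∈ M, ρ t z ∈ M)
    (h0 : (0 : Fin m → ℂ) ∈ M)
    (d : ℕ) (hd : 0 < d)
    (g : (Fin m → ℂ) → ℂ)
    (hg : ∀ (t : ℂ), t ≠ 0 → ∀ z ∈ M, g (ρ t z) = t ^ d * g z)
    (h : (Fin m → ℂ) → ℂ)
    (W : Set (Fin m → ℂ)) (hW : W ∈ nhds (0 : Fin m → ℂ))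
    (hghol : DifferentiableOn ℂ g W)
    (hh : DifferentiableOn ℂ h W) (hh0 : ∀ z ∈ W, h z ≠ 0)
    (f : (Fin m → ℂ) → ℂ) (hfhg : ∀ z ∈ W, f z = h z * g z) :
    ∃ U ∈ nhds (0 : Fin m → ℂ), ∃ F : (Fin m → ℂ) → (Fin m → ℂ),
      DifferentiableOn ℂ F U ∧ Set.MapsTo F (U ∩ M) M ∧
      (∃ V ∈ nhds (0 : Fin m → ℂ), ∃ G : (Fin m → ℂ) → (Fin m → ℂ),
        DifferentiableOn ℂ G V ∧ Set.MapsTo G (V ∩ M) (U ∩ M) ∧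
        (∀ z ∈ U ∩ M, G (F z) = z) ∧ ∀ z ∈ V ∩ M, F (G z) = z) ∧
      ∀ z ∈ U ∩ M, f (F z) = g z :=
  stmt14_general m w M ρ hρ hMinv d hd g hg h W hW hh hh0 f hfhg
end
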